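/- arXiv:1012.2346 — 5 statements merged into one kernel-verified Lean document; each statement's English description precedes it below -/
import Mathlib

section
/- Let f : [0,∞) → ℝ be right-continuous with left limits (càdlàg) without negative jumps, and g : [0,∞) → ℝ càdlàg and non-decreasing, with f(0) + g(0) ≥ 0. Extend f to ℝ by f(x) = f(0) for x ≤ 0. If h : [0,∞) → ℝ is càdlàg and satisfies h(t) = f(∫₀ᵗ h(s) ds) + g(t) for all t ≥ 0, then h(t) ≥ 0 for all t ≥ 0. -/
open Set MeasureTheory Filter

/-- non-negativity of càdlàg solutions of the generalized Lamperti
equation `h(t) = f(∫₀ᵗ h) + g(t)` for an admissible breadth-first pair `(f,g)`,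
with `f` extended by constancy to the negative half-line. -/
theorem generalized_lamperti_nonneg
    (f g h fm gm : ℝ → ℝ)
    -- f is càdlàg on [0,∞) without negative jumps (fm is its left-limit function)
    (hf_rc : ∀ t ≥ (0:ℝ), ContinuousWithinAt f (Ici t) t)
    (hf_ll : ∀ t > (0:ℝ), Tendsto f (nhdsWithin t (Iio t)) (nhds (fm t)))
    (hf_nnj : ∀ t > (0:ℝ), fm t ≤ f t)
    -- f is extended to ℝ by f(x) = f(0) for x ≤ 0
    (hf_ext : ∀ x ≤ (0:ℝ), f x = f 0)
    -- g is càdlàg and non-decreasing on [0,∞)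
    (hg_rc : ∀ t ≥ (0:ℝ), ContinuousWithinAt g (Ici t) t)
    (hg_ll : ∀ t > (0:ℝ), Tendsto g (nhdsWithin t (Iio t)) (nhds (gm t)))
    (hg_mono : ∀ s t, (0:ℝ) ≤ s → s ≤ t → g s ≤ g t)
    (h0 : 0 ≤ f 0 + g 0)
    -- h is càdlàg and locally integrable
    (hh_rc : ∀ t ≥ (0:ℝ), ContinuousWithinAt h (Ici t) t)
    (hh_ll : ∀ t > (0:ℝ), ∃ l, Tendsto h (nhdsWithin t (Iio t)) (nhds l))
    (hh_int : ∀ t ≥ (0:ℝ), IntervalIntegrable h volume 0 t)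
    -- the functional equation
    (heq : ∀ t ≥ (0:ℝ), h t = f (∫ s in (0:ℝ)..t, h s) + g t) :
    ∀ t ≥ (0:ℝ), 0 ≤ h t := by
  intro t ht
  by_contra hneg
  push_neg at hneg
  set I : ℝ → ℝ := fun u => ∫ s in (0:ℝ)..u, h s with hIdef
  have hI0 : I 0 = 0 := intervalIntegral.integral_same
  -- find t' > t with h < 0 on [t, t']
  have hten : Tendsto h (nhdsWithin t (Ici t)) (nhds (h t)) := hh_rc t ht
  have hev : ∀ᶠ u in nhdsWithin t (Ici t), h u < 0 := hten.eventually_lt_const hneg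
  obtain ⟨δ, hδpos, hδ⟩ : ∃ δ > 0, Metric.ball t δ ∩ Ici t ⊆ {u | h u < 0} :=
    Metric.mem_nhdsWithin_iff.mp hev
  set t' : ℝ := t + δ/2 with ht'def
  have htt' : t < t' := by simp [ht'def]; linarith
  have ht'0 : (0:ℝ) ≤ t' := le_of_lt (lt_of_le_of_lt ht htt')
  have hneg' : ∀ u ∈ Icc t t', h u < 0 := by
    intro u hu
    apply hδ
    constructor
    · rw [Metric.mem_ball, Real.dist_eq, abs_lt]
      have h2 := hu.2
      rw [ht'def] at h2
      constructor <;> [linarith [hu.1]; linarith]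
    · exact hu.1
  have hnegt' : h t' < 0 := hneg' t' ⟨le_of_lt htt', le_refl _⟩
  -- I is continuous on [0, t']
  have hint' : IntegrableOn h (Icc 0 t') volume :=
    (intervalIntegrable_iff_integrableOn_Icc_of_le ht'0).mp (hh_int t' ht'0)
  have hIcont : ContinuousOn I (Icc 0 t') := by
    have := intervalIntegral.continuousOn_primitive_interval
      (show IntegrableOn h (uIcc 0 t') volume by rwa [uIcc_of_le ht'0])
    rwa [uIcc_of_le ht'0] at this
  -- I u ≥ I t' for u ∈ [t, t']
  have hmono : ∀ u ∈ Icc t t', I t' ≤ I u := by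
    intro u hu
    have hu0 : (0:ℝ) ≤ u := le_trans ht hu.1
    have hadd : I u + ∫ s in u..t', h s = I t' :=
      intervalIntegral.integral_add_adjacent_intervals (hh_int u hu0)
        ((hh_int t' ht'0).mono_set (by
          rw [uIcc_of_le hu.2, uIcc_of_le ht'0]
          exact Icc_subset_Icc hu0 le_rfl))
    have hle : (∫ s in u..t', h s) ≤ 0 := by
      have hpos : 0 ≤ ∫ s in u..t', -h s :=
        intervalIntegral.integral_nonneg hu.2 (fun x hx => by
          simpa using le_of_lt (hneg' x ⟨le_trans hu.1 hx.1, hx.2⟩))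
      rw [intervalIntegral.integral_neg] at hpos
      linarith
    linarith
  rcases le_or_gt (I t') 0 with hIt' | hIt'
  · -- I t' ≤ 0 : then h t' = f 0 + g t' ≥ f 0 + g 0 ≥ 0
    have := heq t' ht'0
    rw [show (∫ s in (0:ℝ)..t', h s) = I t' from rfl, hf_ext _ hIt'] at this
    have hg' : g 0 ≤ g t' := hg_mono 0 t' le_rfl ht'0
    linarith
  · -- I t' > 0
    set S : Set ℝ := {u | u ∈ Icc 0 t' ∧ I u < I t'} with hSdef
    have hS0 : (0:ℝ) ∈ S := ⟨⟨le_rfl, ht'0⟩, by rwa [hI0]⟩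
    have hSne : S.Nonempty := ⟨0, hS0⟩
    have hSle : ∀ u ∈ S, u ≤ t := by
      intro u hu
      by_contra hut
      push_neg at hut
      exact absurd hu.2 (not_lt.mpr (hmono u ⟨le_of_lt hut, hu.1.2⟩))
    have hbdd : BddAbove S := ⟨t, hSle⟩
    set s : ℝ := sSup S with hsdef
    have hs0 : (0:ℝ) ≤ s := le_csSup hbdd hS0
    have hst : s ≤ t := csSup_le hSne hSle
    have hst' : s < t' := lt_of_le_of_lt hst htt'
    have hsIcc : s ∈ Icc 0 t' := ⟨hs0, le_of_lt hst'⟩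
    have hclo : s ∈ closure S := (isLUB_csSup hSne hbdd).mem_closure hSne
    have hSsub : S ⊆ Icc 0 t' := fun u hu => hu.1
    have hIcW : ContinuousWithinAt I (Icc 0 t') s := hIcont s hsIcc
    -- I s ≤ I t'
    have hIs_le : I s ≤ I t' := by
      have hne : (nhdsWithin s S).NeBot := mem_closure_iff_nhdsWithin_neBot.mp hclo
      have htend : Tendsto I (nhdsWithin s S) (nhds (I s)) := hIcW.mono hSsub
      exact le_of_tendsto htend (eventually_nhdsWithin_of_forall
        (fun u hu => le_of_lt hu.2))
    -- I t' ≤ I s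
    have hIs_ge : I t' ≤ I s := by
      have hclo2 : s ∈ closure (Ioc s t') := by
        rw [closure_Ioc (ne_of_lt hst')]
        exact ⟨le_rfl, le_of_lt hst'⟩
      have hne : (nhdsWithin s (Ioc s t')).NeBot :=
        mem_closure_iff_nhdsWithin_neBot.mp hclo2
      have htend : Tendsto I (nhdsWithin s (Ioc s t')) (nhds (I s)) :=
        hIcW.mono (fun u hu => ⟨le_trans hs0 (le_of_lt hu.1), hu.2⟩)
      refine ge_of_tendsto htend (eventually_nhdsWithin_of_forall (fun u hu => ?_))
      by_contra hlt
      push_neg at hlt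
      have : u ∈ S := ⟨⟨le_trans hs0 (le_of_lt hu.1), hu.2⟩, hlt⟩
      exact absurd (le_csSup hbdd this) (not_le.mpr hu.1)
    have hIeq : I s = I t' := le_antisymm hIs_le hIs_ge
    -- FTC: HasDerivWithinAt I (h s) (Ici s) s
    have hmeas : StronglyMeasurableAtFilter h (nhdsWithin s (Ioi s)) volume := by
      refine ⟨Ioo s t', ?_, ?_⟩
      · rw [← Ioi_inter_Iio]
        exact inter_mem_nhdsWithin _ (Iio_mem_nhds hst')
      · have hsub : Ioo s t' ⊆ Icc 0 t' :=
          fun u hu => ⟨le_trans hs0 (le_of_lt hu.1), le_of_lt hu.2⟩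
        exact hint'.aestronglyMeasurable.mono_measure (Measure.restrict_mono hsub le_rfl)
    have hderiv : HasDerivWithinAt I (h s) (Ici s) s :=
      intervalIntegral.integral_hasDerivWithinAt_right (hh_int s hs0) hmeas
        ((hh_rc s hs0).mono Ioi_subset_Ici_self)
    have hslope : Tendsto (slope I s) (nhdsWithin s (Ioi s)) (nhds (h s)) := by
      have := hasDerivWithinAt_iff_tendsto_slope.mp hderiv
      rwa [Ici_sdiff_left] at this
    have hhs : 0 ≤ h s := by
      refine ge_of_tendsto hslope ?_
      filter_upwards [eventually_mem_nhdsWithin,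
        nhdsWithin_le_nhds (Iio_mem_nhds hst')] with u hu1 hu2
      have hu' : u ∈ Ioc s t' := ⟨hu1, le_of_lt hu2⟩
      have h1 : I s ≤ I u := by
        by_contra hlt
        push_neg at hlt
        rw [hIeq] at hlt
        have : u ∈ S := ⟨⟨le_trans hs0 (le_of_lt hu1), hu'.2⟩, hlt⟩
        exact absurd (le_csSup hbdd this) (not_le.mpr hu1)
      rw [slope_def_field]
      exact div_nonneg (sub_nonneg.mpr h1) (sub_nonneg.mpr (le_of_lt (mem_Ioi.mp hu1)))
    -- conclude
    have hhs_eq := heq s hs0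
    have hht'_eq := heq t' ht'0
    rw [show (∫ x in (0:ℝ)..s, h x) = I s from rfl] at hhs_eq
    rw [show (∫ x in (0:ℝ)..t', h x) = I t' from rfl, ← hIeq] at hht'_eq
    have hg' : g s ≤ g t' := hg_mono s t' hs0 (le_of_lt hst')
    linarith
end

section
/- Let (f,g) be an admissible breadth-first pair with g strictly increasing. If c : [0,∞) → [0,∞) is continuous, non-decreasing, c(0) = 0, and its right-hand derivative satisfies c'₊(t) = f(c(t)) + g(t) for all t, then c is strictly increasing. -/
open Set MeasureTheory Filter

/-- Right-continuity at every point of `[0,∞)`. -/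
def RightCont (f : ℝ → ℝ) : Prop := ∀ t ≥ (0:ℝ), ContinuousWithinAt f (Ici t) t

/-- `fm` is the left-limit function of `f` on `(0,∞)`. -/
def LeftLimAt (f fm : ℝ → ℝ) : Prop :=
  ∀ t > (0:ℝ), Tendsto f (nhdsWithin t (Iio t)) (nhds (fm t))

/-- An admissible breadth-first pair `(f,g)` (with left-limit functions `fm`, `gm`):
`f`, `g` are càdlàg on `[0,∞)`, `f` has no negative jumps, `g` is non-decreasing,
and `f(0) + g(0) ≥ 0`. -/
def AdmissiblePair (f fm g gm : ℝ → ℝ) : Prop :=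
  RightCont f ∧ LeftLimAt f fm ∧ (∀ t > (0:ℝ), fm t ≤ f t) ∧
  RightCont g ∧ LeftLimAt g gm ∧ (∀ s t, (0:ℝ) ≤ s → s ≤ t → g s ≤ g t) ∧
  0 ≤ f 0 + g 0

theorem HasDerivWithinAt.eq_zero_of_eqOn_Icc {c : ℝ → ℝ} {c' k p b : ℝ}
    (hd : HasDerivWithinAt c c' (Ici p) p) (hpb : p < b) (hconst : EqOn c (fun _ => k) (Icc p b)) :
    c' = 0 := by
  have hp : p ∈ Icc p b := left_mem_Icc.2 hpb.le
  have hconst' : HasDerivWithinAt c 0 (Icc p b) p :=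
    (hasDerivWithinAt_const p (Icc p b) k).congr hconst (hconst hp)
  exact (uniqueDiffOn_Icc hpb p hp).eq_deriv _ (hd.mono Icc_subset_Ici_self) hconst'

theorem MonotoneOn.eq_left_of_mem_Icc {α β : Type*} [Preorder α] [PartialOrder β] {c : α → β}
    {s : Set α} {a b x : α} (hc : MonotoneOn c s) (hs : Icc a b ⊆ s) (hba : c b ≤ c a)
    (hx : x ∈ Icc a b) : c x = c a :=
  have hab : a ≤ b := hx.1.trans hx.2
  le_antisymm ((hc (hs hx) (hs (right_mem_Icc.2 hab)) hx.2).trans hba)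
    (hc (hs (left_mem_Icc.2 hab)) (hs hx) hx.1)

/-- If `c` were flat on `[a, b]`, its right derivative `f (c a) + g t` would vanish both at
`t = a` and at some `m ∈ (a, b)`, which is impossible for strictly increasing `g`. -/
theorem strictly_increasing_immigration_general
    (f g c : ℝ → ℝ)
    (hg_strict : StrictMonoOn g (Ici 0))
    (hc_mono : ∀ s t, (0:ℝ) ≤ s → s ≤ t → c s ≤ c t)
    (hc_deriv : ∀ t ≥ (0:ℝ), HasDerivWithinAt c (f (c t) + g t) (Ici t) t) :
    StrictMonoOn c (Ici 0) := by
  have hmono : MonotoneOn c (Ici 0) := fun s hs t _ hst => hc_mono s t hs hst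
  intro a (ha : 0 ≤ a) b _ hab
  by_contra hflat
  have hconst : ∀ x ∈ Icc a b, c x = c a := fun x hx =>
    hmono.eq_left_of_mem_Icc (Icc_subset_Ici_self.trans (Ici_subset_Ici.2 ha)) (not_lt.1 hflat) hx
  have hderiv_zero : ∀ p ∈ Ico a b, f (c a) + g p = 0 := by
    intro p hp
    rw [← hconst p (Ico_subset_Icc_self hp)]
    exact (hc_deriv p (ha.trans hp.1)).eq_zero_of_eqOn_Icc hp.2
      fun _ hx => hconst _ ⟨hp.1.trans hx.1, hx.2⟩
  obtain ⟨m, ham, hmb⟩ := exists_between hab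
  have hgm : g a < g m := hg_strict ha (ha.trans ham.le) ham
  linarith [hderiv_zero a (left_mem_Ico.2 hab), hderiv_zero m ⟨ham.le, hmb⟩]

/-- if `g` is strictly increasing, then any solution `c` of the
initial value problem `c'₊ = f ∘ c + g`, `c(0) = 0`, is strictly increasing. -/
theorem strictly_increasing_immigration
    (f fm g gm c : ℝ → ℝ)
    (hadm : AdmissiblePair f fm g gm)
    (hg_strict : StrictMonoOn g (Ici 0))
    (hc_cont : ContinuousOn c (Ici 0))
    (hc0 : c 0 = 0)
    (hc_nonneg : ∀ t ≥ (0:ℝ), 0 ≤ c t)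
    (hc_mono : ∀ s t, (0:ℝ) ≤ s → s ≤ t → c s ≤ c t)
    (hc_deriv : ∀ t ≥ (0:ℝ), HasDerivWithinAt c (f (c t) + g t) (Ici t) t) :
    StrictMonoOn c (Ici 0) :=
  strictly_increasing_immigration_general f g c hg_strict hc_mono hc_deriv
end

section
/- Let (f,g) be an admissible breadth-first pair and suppose that any two solutions c, c̃ to the initial value problem c(t) = ∫₀ᵗ (f(c(s)) + g(s)) ds, c(0) = 0, are strictly increasing. Then c = c̃; i.e., strict monotonicity of all solutions forces uniqueness. -/
open Set MeasureTheory Filter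

/-!
Suppose `c t₀ < c̃ t₀` and let `a < t₀` be the last time at which the two solutions agree, so
`c < c̃` on `(a, t₀]`. Both solutions are strictly increasing, so their right-continuous
integrands `f ∘ c + g` and `f ∘ c̃ + g` are nonnegative.

If `f (c s) + g s = 0` for some `s ∈ (a, t₀]`, then `c̃` reaches the level `c s` at a time `u < s`;
nonnegativity of `f (c̃ u) + g u` and monotonicity of `g` force `f (c s) + g = 0` on `[u, s]`, so
following `c̃` up to `u`, resting at `c s` until `s` and following `c` afterwards is a solution
that is not strictly increasing.

Otherwise let `τ` be the inverse of `c̃` and `H x = 1 / (f x + g (τ x))`. The image of `F ds`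
under a primitive of `F` is Lebesgue measure, so substituting `x = c s` and `x = c̃ s`, and using
`τ (c s) ≤ s` with the monotonicity of `g`, gives `t₀ - a ≤ ∫_{c a}^{c t₀} H = u₀ - a` for the
time `u₀` with `c̃ u₀ = c t₀`. But `u₀ < t₀`.
-/

open scoped ENNReal

theorem measurable_of_continuousWithinAt_Ici {α : Type*} [TopologicalSpace α] [LinearOrder α]
    [OrderTopology α] [SecondCountableTopology α] [MeasurableSpace α] [BorelSpace α]
    {φ : α → ℝ} (hφ : ∀ x, ContinuousWithinAt φ (Ici x) x) : Measurable φ :=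
  measurable_of_isOpen fun _ hU => MeasurableSet.of_mem_nhdsGT fun x hx =>
    nhdsWithin_mono x Ioi_subset_Ici_self ((hφ x).preimage_mem_nhdsWithin (hU.mem_nhds hx))

theorem RightCont.measurable_comp_max {f : ℝ → ℝ} (hf : RightCont f) :
    Measurable (fun x => f (max 0 x)) := by
  refine measurable_of_continuousWithinAt_Ici fun x => ?_
  rcases lt_or_ge x 0 with hx | hx
  · refine (continuousAt_const (y := f 0)).continuousWithinAt.congr_of_eventuallyEq ?_ ?_
    · filter_upwards [nhdsWithin_le_nhds (Iio_mem_nhds hx)] with y hy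
      rw [max_eq_left (le_of_lt hy)]
    · rw [max_eq_left hx.le]
  · exact (hf x hx).congr (fun y hy => by rw [max_eq_right (hx.trans hy)])
      (by rw [max_eq_right hx])

theorem exists_last_zero {h : ℝ → ℝ} {a b : ℝ} (hh : ContinuousOn h (Icc a b)) (hab : a ≤ b)
    (ha : h a = 0) (hb : 0 < h b) : ∃ t ∈ Ico a b, h t = 0 ∧ ∀ s ∈ Ioc t b, 0 < h s := by
  set Z := Icc a b ∩ h ⁻¹' {0}
  have hZ : IsClosed Z := hh.preimage_isClosed_of_isClosed isClosed_Icc isClosed_singleton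
  have hZbdd : BddAbove Z := ⟨b, fun t ht => ht.1.2⟩
  have hmem : sSup Z ∈ Z := hZ.csSup_mem ⟨a, ⟨le_rfl, hab⟩, ha⟩ hZbdd
  have hne : sSup Z ≠ b := fun heq => by
    have : h (sSup Z) = 0 := hmem.2
    rw [heq] at this; linarith
  refine ⟨sSup Z, ⟨hmem.1.1, lt_of_le_of_ne hmem.1.2 hne⟩, hmem.2, fun s hs => ?_⟩
  by_contra! hsneg
  obtain ⟨r, hr, hr0⟩ := intermediate_value_Icc hs.2
    (hh.mono (Icc_subset_Icc (hmem.1.1.trans hs.1.le) le_rfl))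
    (⟨hsneg, hb.le⟩ : (0:ℝ) ∈ Icc (h s) (h b))
  have : r ≤ sSup Z := le_csSup hZbdd ⟨⟨hmem.1.1.trans (hs.1.le.trans hr.1), hr.2⟩, hr0⟩
  linarith [hs.1, hr.1]

theorem StrictMonoOn.preimage_Iic_inter_Ioc {d : ℝ → ℝ} {a b m x : ℝ}
    (hd : StrictMonoOn d (Icc a b)) (hm : m ∈ Icc a b) (hdm : d m = max (d a) (min (d b) x)) :
    d ⁻¹' Iic x ∩ Ioc a b = Ioc a m := by
  have hab : a ≤ b := hm.1.trans hm.2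
  ext s
  simp only [mem_inter_iff, mem_preimage, mem_Iic, mem_Ioc]
  constructor
  · rintro ⟨hsx, has, hsb⟩
    refine ⟨has, (hd.le_iff_le ⟨has.le, hsb⟩ hm).1 ?_⟩
    rw [hdm]
    exact le_max_of_le_right (le_min (hd.monotoneOn ⟨has.le, hsb⟩ ⟨hab, le_rfl⟩ hsb) hsx)
  · rintro ⟨has, hsm⟩
    have hs : s ∈ Icc a b := ⟨has.le, hsm.trans hm.2⟩
    have hsm' := (hd.le_iff_le hs hm).2 hsm
    rw [hdm, le_max_iff] at hsm'
    have hds : d s ≤ min (d b) x := hsm'.resolve_left (hd ⟨le_rfl, hab⟩ hs has).not_ge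
    exact ⟨hds.trans (min_le_right _ _), has, hs.2⟩

-- For `x < d 0` the set is empty and `sSup ∅ = 0`, which keeps `genInv d T` monotone.
noncomputable def genInv (d : ℝ → ℝ) (T x : ℝ) : ℝ := sSup {t ∈ Icc 0 T | d t ≤ x}

section genInv

variable {d : ℝ → ℝ} {T : ℝ}

theorem genInv_nonneg (x : ℝ) : 0 ≤ genInv d T x :=
  Real.sSup_nonneg fun _ ht => ht.1.1

theorem monotone_genInv : Monotone (genInv d T) := by
  intro x y hxy
  have hsub : {t ∈ Icc 0 T | d t ≤ x} ⊆ {t ∈ Icc 0 T | d t ≤ y} :=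
    fun t ht => ⟨ht.1, ht.2.trans hxy⟩
  rcases {t ∈ Icc 0 T | d t ≤ x}.eq_empty_or_nonempty with h | h
  · rw [genInv, h, Real.sSup_empty]
    exact genInv_nonneg y
  · exact csSup_le_csSup ⟨T, fun t ht => ht.1.2⟩ h hsub

theorem genInv_apply_of_strictMonoOn (hd : StrictMonoOn d (Icc 0 T)) {s : ℝ} (hs : s ∈ Icc 0 T) :
    genInv d T (d s) = s :=
  le_antisymm (csSup_le ⟨s, hs, le_rfl⟩ fun _ ht => (hd.le_iff_le ht.1 hs).mp ht.2)
    (le_csSup ⟨T, fun _ ht => ht.1.2⟩ ⟨hs, le_rfl⟩)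

end genInv

def IsPrimitiveFromZero (d F : ℝ → ℝ) : Prop :=
  (∀ t ≥ (0:ℝ), IntervalIntegrable F volume 0 t) ∧ ∀ t ≥ (0:ℝ), d t = ∫ s in (0:ℝ)..t, F s

namespace IsPrimitiveFromZero

variable {d F : ℝ → ℝ} {a b : ℝ}

theorem congr {d' F' : ℝ → ℝ} (h : IsPrimitiveFromZero d F) (hd : EqOn d d' (Ici 0))
    (hF : EqOn F F' (Ici 0)) : IsPrimitiveFromZero d' F' := by
  have hF' : ∀ t ≥ (0:ℝ), EqOn F F' (uIoc 0 t) := fun t ht s hs => by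
    rw [uIoc_of_le ht] at hs
    exact hF hs.1.le
  refine ⟨fun t ht => (h.1 t ht).congr (hF' t ht), fun t ht => ?_⟩
  rw [← hd ht, h.2 t ht]
  exact intervalIntegral.integral_congr_ae (ae_of_all _ (hF' t ht))

theorem apply_zero (h : IsPrimitiveFromZero d F) : d 0 = 0 := by
  rw [h.2 0 le_rfl, intervalIntegral.integral_same]

theorem intervalIntegrable (h : IsPrimitiveFromZero d F) (ha : 0 ≤ a) (hab : a ≤ b) :
    IntervalIntegrable F volume a b :=
  (h.1 b (ha.trans hab)).mono_set (by
    rw [uIcc_of_le hab, uIcc_of_le (ha.trans hab)]; exact Icc_subset_Icc ha le_rfl)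

theorem integral_eq_sub (h : IsPrimitiveFromZero d F) (ha : 0 ≤ a) (hab : a ≤ b) :
    ∫ s in a..b, F s = d b - d a := by
  rw [h.2 b (ha.trans hab), h.2 a ha,
    intervalIntegral.integral_interval_sub_left (h.1 b (ha.trans hab)) (h.1 a ha)]

theorem continuousOn (h : IsPrimitiveFromZero d F) : ContinuousOn d (Ici 0) := by
  intro t (ht : 0 ≤ t)
  have hP := intervalIntegral.continuousOn_primitive_interval' (h.1 (t + 1) (by linarith))
    left_mem_uIcc
  rw [uIcc_of_le (by linarith)] at hP
  have hIcc : ContinuousWithinAt d (Icc 0 (t + 1)) t :=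
    (hP t ⟨ht, by linarith⟩).congr (fun y hy => h.2 y hy.1) (h.2 t ht)
  rw [← Ici_inter_Iic] at hIcc
  exact hIcc.mono_of_mem_nhdsWithin (inter_mem_nhdsWithin _ (Iic_mem_nhds (by linarith)))

theorem continuous_comp_max (h : IsPrimitiveFromZero d F) : Continuous (fun t => d (max 0 t)) :=
  h.continuousOn.comp_continuous (continuous_const.max continuous_id) fun x => le_max_left 0 x

theorem nonneg_of_monotoneOn (h : IsPrimitiveFromZero d F) (hF : RightCont F)
    (hd : MonotoneOn d (Ici 0)) {t : ℝ} (ht : 0 ≤ t) : 0 ≤ F t := by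
  by_contra! hneg
  obtain ⟨t', htt', hbound⟩ : ∃ t' > t, ∀ s ∈ Icc t t', F s ≤ F t / 2 :=
    mem_nhdsGE_iff_exists_Icc_subset.1
      ((hF t ht).eventually (eventually_le_nhds (by linarith : F t < F t / 2)))
  have hint : ∫ s in t..t', F s ≤ ∫ s in t..t', F t / 2 :=
    intervalIntegral.integral_mono_on htt'.le (h.intervalIntegrable ht htt'.le)
      intervalIntegrable_const hbound
  rw [h.integral_eq_sub ht htt'.le, intervalIntegral.integral_const, smul_eq_mul] at hint
  have := hd ht (ht.trans htt'.le) htt'.le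
  nlinarith

theorem setLIntegral_Ioc (h : IsPrimitiveFromZero d F) (hF : ∀ t ∈ Ioc a b, 0 ≤ F t)
    (ha : 0 ≤ a) (hab : a ≤ b) :
    ∫⁻ s in Ioc a b, ENNReal.ofReal (F s) = ENNReal.ofReal (d b - d a) := by
  rw [← h.integral_eq_sub ha hab, intervalIntegral.integral_of_le hab,
    ofReal_integral_eq_lintegral_ofReal ((h.intervalIntegrable ha hab).1)]
  exact (ae_restrict_iff' measurableSet_Ioc).2 (ae_of_all _ hF)

theorem map_withDensity (h : IsPrimitiveFromZero d F) (hF : ∀ t ∈ Ioc a b, 0 ≤ F t)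
    (hcont : Continuous d) (hd : StrictMonoOn d (Ici 0)) (ha : 0 ≤ a) (hab : a ≤ b) :
    ((volume.restrict (Ioc a b)).withDensity (fun s => ENNReal.ofReal (F s))).map d
      = volume.restrict (Ioc (d a) (d b)) := by
  have hdab : d a ≤ d b := hd.monotoneOn ha (ha.trans hab) hab
  have hfin : IsFiniteMeasure
      (((volume.restrict (Ioc a b)).withDensity (fun s => ENNReal.ofReal (F s))).map d) := by
    refine ⟨?_⟩
    rw [Measure.map_apply hcont.measurable MeasurableSet.univ, preimage_univ,
      withDensity_apply _ MeasurableSet.univ, Measure.restrict_univ, h.setLIntegral_Ioc hF ha hab]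
    exact ENNReal.ofReal_lt_top
  refine Measure.ext_of_Iic _ _ fun x => ?_
  obtain ⟨m, hm, hdm⟩ := intermediate_value_Icc hab hcont.continuousOn
    (⟨le_max_left _ _, max_le hdab (min_le_left _ _)⟩ :
      max (d a) (min (d b) x) ∈ Icc (d a) (d b))
  rw [Measure.map_apply hcont.measurable measurableSet_Iic,
    withDensity_apply _ (hcont.measurable measurableSet_Iic),
    Measure.restrict_restrict (hcont.measurable measurableSet_Iic),
    (hd.mono fun s hs => ha.trans hs.1).preimage_Iic_inter_Ioc hm hdm,
    h.setLIntegral_Ioc (fun t ht => hF t ⟨ht.1, ht.2.trans hm.2⟩) ha hm.1, hdm,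
    Measure.restrict_apply measurableSet_Iic,
    inter_comm, Ioc_inter_Iic, Real.volume_Ioc]
  rcases le_total (min (d b) x) (d a) with hw | hw
  · rw [max_eq_left hw, sub_self, ENNReal.ofReal_zero, ENNReal.ofReal_of_nonpos (by linarith)]
  · rw [max_eq_right hw]

theorem setLIntegral_comp_mul (h : IsPrimitiveFromZero d F) (hF : ∀ t ∈ Ioc a b, 0 ≤ F t)
    (hcont : Continuous d) (hd : StrictMonoOn d (Ici 0)) {H : ℝ → ℝ≥0∞} (hH : Measurable H)
    (ha : 0 ≤ a) (hab : a ≤ b) :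
    ∫⁻ s in Ioc a b, H (d s) * ENNReal.ofReal (F s) = ∫⁻ x in Ioc (d a) (d b), H x := by
  rw [← h.map_withDensity hF hcont hd ha hab, lintegral_map hH hcont.measurable,
    lintegral_withDensity_eq_lintegral_mul₀
      (h.intervalIntegrable ha hab).1.aemeasurable.ennreal_ofReal
      (g := fun s => H (d s)) (hH.comp hcont.measurable).aemeasurable]
  simp only [Pi.mul_apply, mul_comm]

theorem le_of_weighted_comparison {d' F' : ℝ → ℝ} {b' : ℝ} (h : IsPrimitiveFromZero d F)
    (h' : IsPrimitiveFromZero d' F') (hF : ∀ t ∈ Ioc a b, 0 ≤ F t)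
    (hF' : ∀ t ∈ Ioc a b', 0 ≤ F' t) (hcont : Continuous d) (hcont' : Continuous d')
    (hd : StrictMonoOn d (Ici 0)) (hd' : StrictMonoOn d' (Ici 0)) {H : ℝ → ℝ≥0∞}
    (hH : Measurable H) (ha : 0 ≤ a) (hab : a ≤ b) (hab' : a ≤ b') (hda : d a = d' a)
    (hdb : d b = d' b') (hle : ∀ s ∈ Ioc a b, 1 ≤ H (d s) * ENNReal.ofReal (F s))
    (hle' : ∀ s ∈ Ioc a b', H (d' s) * ENNReal.ofReal (F' s) ≤ 1) : b ≤ b' := by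
  have hvol : ENNReal.ofReal (b - a) ≤ ENNReal.ofReal (b' - a) :=
    calc ENNReal.ofReal (b - a) = ∫⁻ _ in Ioc a b, 1 := by simp
      _ ≤ ∫⁻ s in Ioc a b, H (d s) * ENNReal.ofReal (F s) :=
          setLIntegral_mono' measurableSet_Ioc hle
      _ = ∫⁻ s in Ioc a b', H (d' s) * ENNReal.ofReal (F' s) := by
          rw [h.setLIntegral_comp_mul hF hcont hd hH ha hab, hda, hdb,
            h'.setLIntegral_comp_mul hF' hcont' hd' hH ha hab']
      _ ≤ ∫⁻ _ in Ioc a b', 1 := setLIntegral_mono' measurableSet_Ioc hle'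
      _ = ENNReal.ofReal (b' - a) := by simp
  linarith [(ENNReal.ofReal_le_ofReal_iff (by linarith)).1 hvol]

theorem glue {d₁ d₂ F₁ F₂ : ℝ → ℝ} (h₁ : IsPrimitiveFromZero d₁ F₁)
    (h₂ : IsPrimitiveFromZero d₂ F₂) {u s : ℝ} (hu : 0 ≤ u) (hus : u ≤ s) (heq : d₁ u = d₂ s) :
    IsPrimitiveFromZero (fun t => if t ≤ u then d₁ t else if t ≤ s then d₁ u else d₂ t)
      (fun t => if t ≤ u then F₁ t else if t ≤ s then 0 else F₂ t) := by
  set G : ℝ → ℝ := fun t => if t ≤ u then F₁ t else if t ≤ s then 0 else F₂ t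
  have hs : 0 ≤ s := hu.trans hus
  have e₁ : ∀ t ∈ Icc 0 u, EqOn F₁ G (uIoc 0 t) := fun t ht x hx => by
    rw [uIoc_of_le ht.1] at hx
    simp [G, hx.2.trans ht.2]
  have e₂ : ∀ t ∈ Icc u s, EqOn 0 G (uIoc u t) := fun t ht x hx => by
    rw [uIoc_of_le ht.1] at hx
    simp [G, not_le.2 hx.1, hx.2.trans ht.2]
  have e₃ : ∀ t ≥ s, EqOn F₂ G (uIoc s t) := fun t ht x hx => by
    rw [uIoc_of_le ht] at hx
    simp [G, not_le.2 (hus.trans_lt hx.1), not_le.2 hx.1]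
  have i₁ : ∀ t ∈ Icc 0 u, IntervalIntegrable G volume 0 t := fun t ht =>
    (h₁.1 t ht.1).congr (e₁ t ht)
  have i₂ : ∀ t ∈ Icc u s, IntervalIntegrable G volume u t := fun t ht =>
    intervalIntegrable_const.congr (e₂ t ht)
  have i₃ : ∀ t ≥ s, IntervalIntegrable G volume s t := fun t ht =>
    (h₂.intervalIntegrable hs ht).congr (e₃ t ht)
  have I₁ : ∀ t ∈ Icc 0 u, ∫ x in (0:ℝ)..t, G x = d₁ t := fun t ht => by
    rw [h₁.2 t ht.1]; exact (intervalIntegral.integral_congr_ae (ae_of_all _ (e₁ t ht))).symm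
  have I₂ : ∀ t ∈ Icc u s, ∫ x in u..t, G x = 0 := fun t ht => by
    rw [← intervalIntegral.integral_congr_ae (ae_of_all _ (e₂ t ht))]; simp
  have I₃ : ∀ t ≥ s, ∫ x in s..t, G x = d₂ t - d₂ s := fun t ht => by
    rw [← h₂.integral_eq_sub hs ht]
    exact (intervalIntegral.integral_congr_ae (ae_of_all _ (e₃ t ht))).symm
  have hu' : u ∈ Icc 0 u := ⟨hu, le_rfl⟩
  have hs' : s ∈ Icc u s := ⟨hus, le_rfl⟩
  suffices ∀ t ≥ (0:ℝ), IntervalIntegrable G volume 0 t ∧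
      (if t ≤ u then d₁ t else if t ≤ s then d₁ u else d₂ t) = ∫ x in (0:ℝ)..t, G x from
    ⟨fun t ht => (this t ht).1, fun t ht => (this t ht).2⟩
  intro t ht
  by_cases htu : t ≤ u
  · simp only [if_pos htu]
    exact ⟨i₁ t ⟨ht, htu⟩, (I₁ t ⟨ht, htu⟩).symm⟩
  by_cases hts : t ≤ s
  · have ht' : t ∈ Icc u s := ⟨le_of_not_ge htu, hts⟩
    simp only [if_neg htu, if_pos hts]
    refine ⟨(i₁ u hu').trans (i₂ t ht'), ?_⟩
    rw [← intervalIntegral.integral_add_adjacent_intervals (i₁ u hu') (i₂ t ht'), I₁ u hu',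
      I₂ t ht', add_zero]
  · have ht' : s ≤ t := le_of_not_ge hts
    simp only [if_neg htu, if_neg hts]
    refine ⟨((i₁ u hu').trans (i₂ s hs')).trans (i₃ t ht'), ?_⟩
    rw [← intervalIntegral.integral_add_adjacent_intervals ((i₁ u hu').trans (i₂ s hs'))
      (i₃ t ht'), ← intervalIntegral.integral_add_adjacent_intervals (i₁ u hu') (i₂ s hs'),
      I₁ u hu', I₂ s hs', I₃ t ht', heq]
    ring

end IsPrimitiveFromZero

section Solutions

variable {f g : ℝ → ℝ}

theorem RightCont.comp_add {d : ℝ → ℝ} (hf : RightCont f) (hg : RightCont g)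
    (hd : Continuous d) (hdm : MonotoneOn d (Ici 0)) (hd0 : 0 ≤ d 0) :
    RightCont (fun s => f (d s) + g s) := fun t ht =>
  ((hf (d t) (hd0.trans (hdm self_mem_Ici ht ht))).comp hd.continuousWithinAt
    fun _ hs => hdm ht (ht.trans hs) hs).add (hg t ht)

theorem isPrimitiveFromZero_comp_max {d : ℝ → ℝ}
    (hd : IsPrimitiveFromZero d (fun s => f (d s) + g s)) :
    IsPrimitiveFromZero (fun t => d (max 0 t)) (fun s => f (d (max 0 s)) + g s) :=
  hd.congr (fun t (ht : 0 ≤ t) => by simp only [max_eq_right ht])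
    (fun t (ht : 0 ≤ t) => by simp only [max_eq_right ht])

theorem exists_solution_not_strictMonoOn {c ct : ℝ → ℝ}
    (hc : IsPrimitiveFromZero c (fun t => f (c t) + g t))
    (hct : IsPrimitiveFromZero ct (fun t => f (ct t) + g t)) {u s : ℝ} (hu : 0 ≤ u) (hus : u < s)
    (heq : ct u = c s) (hg : ∀ v ∈ Icc u s, f (c s) + g v = 0) :
    ∃ d, IsPrimitiveFromZero d (fun t => f (d t) + g t) ∧ ¬ StrictMonoOn d (Ici 0) := by
  refine ⟨_, (hct.glue hc hu hus.le heq).congr (fun _ _ => rfl) fun t _ => ?_, fun hd => ?_⟩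
  · by_cases htu : t ≤ u
    · simp [htu]
    by_cases hts : t ≤ s
    · simp [htu, hts, heq, hg t ⟨le_of_not_ge htu, hts⟩]
    · simp [htu, hts]
  · have := hd hu (hu.trans hus.le) hus
    simp [hus.not_ge] at this

theorem le_of_solution_le_of_integrand_pos (hf : RightCont f) (hg : MonotoneOn g (Ici 0))
    {c ct : ℝ → ℝ}
    (hc : IsPrimitiveFromZero c (fun t => f (c t) + g t))
    (hct : IsPrimitiveFromZero ct (fun t => f (ct t) + g t))
    (hccont : Continuous c) (hctcont : Continuous ct)
    (hcm : StrictMonoOn c (Ici 0)) (hctm : StrictMonoOn ct (Ici 0))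
    (hFct : ∀ t ≥ (0:ℝ), 0 ≤ f (ct t) + g t)
    {a b b' : ℝ} (ha : 0 ≤ a) (hab : a ≤ b) (hab' : a ≤ b') (hca : c a = ct a) (hcb : c b = ct b')
    (hle : ∀ s ∈ Ioc a b, c s ≤ ct s) (hpos : ∀ s ∈ Ioc a b, 0 < f (c s) + g s) : b ≤ b' := by
  set τ := genInv ct b'
  have hτ : ∀ r ∈ Icc 0 b', τ (ct r) = r := fun r hr =>
    genInv_apply_of_strictMonoOn (hctm.mono Icc_subset_Ici_self) hr
  -- `max 0` is only there to make `H` measurable; it is inert at the levels `x ≥ 0` used below.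
  set H : ℝ → ℝ≥0∞ := fun x => (ENNReal.ofReal (f (max 0 x) + g (τ x)))⁻¹
  have hH : Measurable H := (hf.measurable_comp_max.add (Monotone.measurable fun x y hxy =>
    hg (genInv_nonneg x) (genInv_nonneg y) (monotone_genInv hxy))).ennreal_ofReal.inv
  have h₁ : ∀ s ∈ Ioc a b, 1 ≤ H (c s) * ENNReal.ofReal (f (c s) + g s) := by
    intro s hs
    have hs0 : 0 ≤ s := ha.trans hs.1.le
    obtain ⟨r, hr, hrs⟩ : ∃ r ∈ Icc a b', ct r = c s :=
      intermediate_value_Icc hab' hctcont.continuousOn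
        ⟨hca ▸ hcm.monotoneOn ha hs0 hs.1.le, hcb ▸ hcm.monotoneOn hs0 (ha.trans hab) hs.2⟩
    have hr0 : 0 ≤ r := ha.trans hr.1
    have hτs : τ (c s) = r := hrs ▸ hτ r ⟨hr0, hr.2⟩
    have hcs0 : 0 ≤ c s := hc.apply_zero ▸ hcm.monotoneOn self_mem_Ici hs0 hs0
    have hgrs : g r ≤ g s := hg hr0 hs0 ((hctm.le_iff_le hr0 hs0).1 (hrs ▸ hle s hs))
    calc (1 : ℝ≥0∞) = (ENNReal.ofReal (f (c s) + g s))⁻¹ * ENNReal.ofReal (f (c s) + g s) :=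
          (ENNReal.inv_mul_cancel (by simpa using hpos s hs) ENNReal.ofReal_ne_top).symm
      _ ≤ H (c s) * ENNReal.ofReal (f (c s) + g s) := by
          simp only [H, hτs, max_eq_right hcs0]
          gcongr
  have h₂ : ∀ s ∈ Ioc a b', H (ct s) * ENNReal.ofReal (f (ct s) + g s) ≤ 1 := by
    intro s hs
    have hs0 : 0 ≤ s := ha.trans hs.1.le
    have hcts0 : 0 ≤ ct s := hct.apply_zero ▸ hctm.monotoneOn self_mem_Ici hs0 hs0
    simp only [H, hτ s ⟨hs0, hs.2⟩, max_eq_right hcts0]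
    exact ENNReal.inv_mul_le_one _
  exact hc.le_of_weighted_comparison hct (fun s hs => (hpos s hs).le)
    (fun s hs => hFct s (ha.trans hs.1.le)) hccont hctcont hcm hctm hH ha hab hab' hca hcb h₁ h₂

theorem solution_le_solution_of_continuous (hf : RightCont f) (hg : RightCont g)
    (hgm : MonotoneOn g (Ici 0))
    (hstrict : ∀ d, IsPrimitiveFromZero d (fun t => f (d t) + g t) → StrictMonoOn d (Ici 0))
    {c ct : ℝ → ℝ} (hc : IsPrimitiveFromZero c (fun t => f (c t) + g t))
    (hct : IsPrimitiveFromZero ct (fun t => f (ct t) + g t))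
    (hccont : Continuous c) (hctcont : Continuous ct) {t : ℝ} (ht : 0 ≤ t) : ct t ≤ c t := by
  have hcm := hstrict c hc
  have hctm := hstrict ct hct
  have hFc : ∀ s ≥ (0:ℝ), 0 ≤ f (c s) + g s := fun s hs =>
    hc.nonneg_of_monotoneOn (hf.comp_add hg hccont hcm.monotoneOn hc.apply_zero.ge)
      hcm.monotoneOn hs
  have hFct : ∀ s ≥ (0:ℝ), 0 ≤ f (ct s) + g s := fun s hs =>
    hct.nonneg_of_monotoneOn (hf.comp_add hg hctcont hctm.monotoneOn hct.apply_zero.ge)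
      hctm.monotoneOn hs
  by_contra! hlt
  obtain ⟨a, ha, hca, hgt⟩ := exists_last_zero (h := fun s => ct s - c s)
    (hctcont.sub hccont).continuousOn ht (by simp [hc.apply_zero, hct.apply_zero])
    (sub_pos.2 hlt)
  replace hca : ct a = c a := sub_eq_zero.1 hca
  replace hgt : ∀ s ∈ Ioc a t, c s < ct s := fun s hs => sub_pos.1 (hgt s hs)
  by_cases hzero : ∃ s ∈ Ioc a t, f (c s) + g s = 0
  · obtain ⟨s, hs, hFs⟩ := hzero
    have hs0 : 0 ≤ s := ha.1.trans hs.1.le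
    obtain ⟨u, hu, hctu⟩ : ∃ u ∈ Icc a s, ct u = c s := intermediate_value_Icc hs.1.le
      hctcont.continuousOn ⟨hca ▸ hcm.monotoneOn ha.1 hs0 hs.1.le, (hgt s hs).le⟩
    have hu0 : 0 ≤ u := ha.1.trans hu.1
    have hus : u < s := lt_of_le_of_ne hu.2 (by rintro rfl; linarith [hgt u hs])
    have hconst : ∀ v ∈ Icc u s, f (c s) + g v = 0 := fun v hv => by
      have := hFct u hu0
      rw [hctu] at this
      linarith [hgm hu0 (hu0.trans hv.1) hv.1, hgm (hu0.trans hv.1) hs0 hv.2]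
    obtain ⟨d, hd, hnot⟩ := exists_solution_not_strictMonoOn hc hct hu0 hus hctu hconst
    exact hnot (hstrict d hd)
  · push Not at hzero
    obtain ⟨b', hb', hctb'⟩ : ∃ b' ∈ Icc a t, ct b' = c t := intermediate_value_Icc ha.2.le
      hctcont.continuousOn ⟨hca ▸ hcm.monotoneOn ha.1 ht ha.2.le, hlt.le⟩
    have htb' := le_of_solution_le_of_integrand_pos hf hgm hc hct hccont hctcont hcm hctm hFct ha.1
      ha.2.le hb'.1 hca.symm hctb'.symm (fun s hs => (hgt s hs).le)
      fun s hs => (hFc s (ha.1.trans hs.1.le)).lt_of_ne (hzero s hs).symm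
    rw [le_antisymm hb'.2 htb'] at hctb'
    exact hlt.ne hctb'.symm

theorem solution_le_solution (hf : RightCont f) (hg : RightCont g)
    (hgm : MonotoneOn g (Ici 0))
    (hstrict : ∀ d, IsPrimitiveFromZero d (fun t => f (d t) + g t) → StrictMonoOn d (Ici 0))
    {c ct : ℝ → ℝ} (hc : IsPrimitiveFromZero c (fun t => f (c t) + g t))
    (hct : IsPrimitiveFromZero ct (fun t => f (ct t) + g t)) {t : ℝ} (ht : 0 ≤ t) :
    ct t ≤ c t := by
  simpa [max_eq_right ht] using solution_le_solution_of_continuous hf hg hgm hstrict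
    (isPrimitiveFromZero_comp_max hc) (isPrimitiveFromZero_comp_max hct)
    hc.continuous_comp_max hct.continuous_comp_max ht

end Solutions

/-- if every solution of `c(t) = ∫₀ᵗ (f(c(s)) + g(s)) ds` is
strictly increasing, then the solution is unique. -/
theorem strict_monotone_forces_uniqueness
    (f fm g gm : ℝ → ℝ)
    (hadm : AdmissiblePair f fm g gm)
    (hstrict : ∀ d : ℝ → ℝ,
      (∀ t ≥ (0:ℝ), IntervalIntegrable (fun s => f (d s) + g s) volume 0 t) →
      (∀ t ≥ (0:ℝ), d t = ∫ s in (0:ℝ)..t, (f (d s) + g s)) →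
      StrictMonoOn d (Ici 0))
    (c ct : ℝ → ℝ)
    (hc_int : ∀ t ≥ (0:ℝ), IntervalIntegrable (fun s => f (c s) + g s) volume 0 t)
    (hc : ∀ t ≥ (0:ℝ), c t = ∫ s in (0:ℝ)..t, (f (c s) + g s))
    (hct_int : ∀ t ≥ (0:ℝ), IntervalIntegrable (fun s => f (ct s) + g s) volume 0 t)
    (hct : ∀ t ≥ (0:ℝ), ct t = ∫ s in (0:ℝ)..t, (f (ct s) + g s)) :
    ∀ t ≥ (0:ℝ), c t = ct t := by
  obtain ⟨hf, -, -, hg, -, hgm, -⟩ := hadm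
  have hgm' : MonotoneOn g (Ici 0) := fun s hs _ _ hst => hgm s _ hs hst
  have hstrict' : ∀ d, IsPrimitiveFromZero d (fun t => f (d t) + g t) → StrictMonoOn d (Ici 0) :=
    fun d hd => hstrict d hd.1 hd.2
  intro t ht
  exact le_antisymm (solution_le_solution hf hg hgm' hstrict' ⟨hct_int, hct⟩ ⟨hc_int, hc⟩ ht)
    (solution_le_solution hf hg hgm' hstrict' ⟨hc_int, hc⟩ ⟨hct_int, hct⟩ ht)
end

section
/- Let (f,g) be an admissible breadth-first pair such that f(x) + g(t) > 0 for all x,t ≥ 0 (e.g., if f + g(0) is strictly positive pointwise). Then the initial value problem c'₊ = f∘c + g, c(0)=0 has at most one solution. -/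
open Set MeasureTheory Filter

/-!
Since `f x + g t > 0`, every solution is strictly increasing, so it has an inverse `ψ` (the time
at which level `x` is reached), and `ψ'₊(x) = 1 / (f x + g (ψ x))`. As `g` is non-decreasing, this
rate is non-increasing in `ψ`: if one inverse overtakes another, it grows more slowly from then on.
Hence two inverses starting at `0` cannot separate, and neither can the solutions.
-/

open Topology

structure IsSolution (f g c : ℝ → ℝ) : Prop where
  continuousOn : ContinuousOn c (Ici 0)
  zero : c 0 = 0
  hasDerivWithinAt : ∀ t ≥ (0:ℝ), HasDerivWithinAt c (f (c t) + g t) (Ici t) t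

theorem HasDerivWithinAt.of_local_left_inverse {𝕜 : Type*} [NontriviallyNormedField 𝕜]
    {f g : 𝕜 → 𝕜} {f' a : 𝕜} {s t : Set 𝕜} (hg : Tendsto g (𝓝[s] a) (𝓝[t] (g a)))
    (hf : HasDerivWithinAt f f' t (g a)) (hf' : f' ≠ 0) (ha : a ∈ s)
    (hfg : ∀ᶠ y in 𝓝[s] a, f (g y) = y) : HasDerivWithinAt g f'⁻¹ s a :=
  (show HasFDerivWithinAt f
    (ContinuousLinearEquiv.unitsEquivAut 𝕜 (Units.mk0 f' hf') : 𝕜 →L[𝕜] 𝕜) t (g a) from hf)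
    |>.of_local_left_inverse hg ha hfg

theorem HasDerivWithinAt.exists_mem_Ioc_gt_of_pos {c : ℝ → ℝ} {c' s t : ℝ}
    (hc : HasDerivWithinAt c c' (Ici s) s) (hc' : 0 < c') (hst : s < t) :
    ∃ z ∈ Ioc s t, c s < c z := by
  have hslope : Tendsto (slope c s) (𝓝[>] s) (𝓝 c') :=
    (hasDerivWithinAt_iff_tendsto_slope' self_notMem_Ioi).1 hc.Ioi_of_Ici
  obtain ⟨z, hz, hzmem⟩ := ((hslope.eventually (lt_mem_nhds hc')).and (Ioc_mem_nhdsGT hst)).exists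
  exact ⟨z, hzmem, (slope_pos_iff hzmem.1).1 hz⟩

theorem le_of_deriv_right_pos_of_eq_left {c c' : ℝ → ℝ} {s t : ℝ} (hst : s ≤ t)
    (hc : ContinuousOn c (Icc s t)) (hc' : ∀ x ∈ Ico s t, HasDerivWithinAt c (c' x) (Ici x) x)
    (hpos : ∀ x ∈ Ico s t, c x = c s → 0 < c' x) : c s ≤ c t :=
  image_le_of_deriv_right_lt_deriv_boundary' continuousOn_const
    (fun x _ => hasDerivWithinAt_const x _ (c s)) le_rfl hc hc'
    (fun x hx hx' => hpos x hx hx'.symm) (right_mem_Icc.2 hst)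

theorem image_nonpos_of_deriv_right_nonpos_of_pos {φ φ' : ℝ → ℝ} {a b : ℝ}
    (hφ : ContinuousOn φ (Icc a b)) (hφ' : ∀ x ∈ Ico a b, HasDerivWithinAt φ (φ' x) (Ici x) x)
    (ha : φ a ≤ 0) (hdecr : ∀ x ∈ Ico a b, 0 < φ x → φ' x ≤ 0) :
    ∀ ⦃x⦄, x ∈ Icc a b → φ x ≤ 0 := by
  intro x hx
  -- compare `φ` with the barriers `ε * (y - a + 1)`, which are positive on `[a, b]`
  have hbarrier : ∀ ε > (0:ℝ), φ x ≤ ε * (x - a + 1) := by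
    intro ε hε
    have hB : ∀ y, HasDerivWithinAt (fun y => ε * (y - a + 1)) ε (Ici y) y := fun y => by
      simpa using (((hasDerivAt_id y).sub_const a).add_const 1).const_mul ε |>.hasDerivWithinAt
    refine image_le_of_deriv_right_lt_deriv_boundary' hφ hφ' (by simpa using ha.trans hε.le)
      (by fun_prop) (fun y _ => hB y) (fun y hy hyB => ?_) hx
    exact (hdecr y hy (hyB ▸ mul_pos hε (by linarith [hy.1]))).trans_lt hε
  have hlim : Tendsto (fun ε : ℝ => ε * (x - a + 1)) (𝓝[>] 0) (𝓝 0) :=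
    ((continuous_mul_const _).tendsto' 0 0 (zero_mul _)).mono_left nhdsWithin_le_nhds
  exact ge_of_tendsto hlim (eventually_nhdsWithin_of_forall hbarrier)

theorem MonotoneOn.continuousOn_of_image_eq_Icc {α β : Type*} [LinearOrder α]
    [TopologicalSpace α] [OrderTopology α] [LinearOrder β] [TopologicalSpace β] [OrderTopology β]
    [DenselyOrdered β] {φ : α → β} {p q : α} {r s : β} (hφ : MonotoneOn φ (Icc p q))
    (himage : φ '' Icc p q = Icc r s) : ContinuousOn φ (Icc p q) := by
  have hmaps : MapsTo φ (Icc p q) (Icc r s) := himage ▸ mapsTo_image φ _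
  have hsurj : Function.Surjective hmaps.restrict := by
    rintro ⟨y, hy⟩
    obtain ⟨x, hx, rfl⟩ := himage.symm ▸ hy
    exact ⟨⟨x, hx⟩, rfl⟩
  rw [continuousOn_iff_continuous_domRestrict]
  exact continuous_subtype_val.comp
    (Monotone.continuous_of_surjective (f := hmaps.restrict) (fun x y hxy => hφ x.2 y.2 hxy) hsurj)

theorem StrictMonoOn.continuousOn_invFunOn_Icc {c : ℝ → ℝ} {p q : ℝ} (hpq : p ≤ q)
    (hc : ContinuousOn c (Icc p q)) (hmono : StrictMonoOn c (Icc p q)) :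
    ContinuousOn (Function.invFunOn c (Icc p q)) (Icc (c p) (c q)) := by
  have hsurj := hc.surjOn_Icc (left_mem_Icc.2 hpq) (right_mem_Icc.2 hpq)
  refine MonotoneOn.continuousOn_of_image_eq_Icc (r := p) (s := q)
    (Function.monotoneOn_of_rightInvOn_of_mapsTo hmono.monotoneOn hsurj.rightInvOn_invFunOn
      hsurj.mapsTo_invFunOn) ?_
  rw [← hc.image_Icc_of_monotoneOn hpq hmono.monotoneOn, hmono.injOn.leftInvOn_invFunOn.image_image]

namespace IsSolution

variable {f g c : ℝ → ℝ}

theorem le_of_le (hpos : ∀ x ≥ (0:ℝ), ∀ t ≥ (0:ℝ), 0 < f x + g t) (hc : IsSolution f g c)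
    {s t : ℝ} (hs : 0 ≤ s) (hcs : 0 ≤ c s) (hst : s ≤ t) : c s ≤ c t :=
  le_of_deriv_right_pos_of_eq_left hst (hc.continuousOn.mono fun _ hx => hs.trans hx.1)
    (fun x hx => hc.hasDerivWithinAt x (hs.trans hx.1))
    (fun _ hx hxs => hpos _ (hxs ▸ hcs) _ (hs.trans hx.1))

theorem nonneg (hpos : ∀ x ≥ (0:ℝ), ∀ t ≥ (0:ℝ), 0 < f x + g t) (hc : IsSolution f g c)
    {t : ℝ} (ht : 0 ≤ t) : 0 ≤ c t :=
  hc.zero ▸ hc.le_of_le hpos le_rfl hc.zero.ge ht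

theorem strictMonoOn (hpos : ∀ x ≥ (0:ℝ), ∀ t ≥ (0:ℝ), 0 < f x + g t) (hc : IsSolution f g c) :
    StrictMonoOn c (Ici 0) := by
  intro s hs t _ hst
  obtain ⟨z, hz, hsz⟩ :=
    (hc.hasDerivWithinAt s hs).exists_mem_Ioc_gt_of_pos (hpos _ (hc.nonneg hpos hs) _ hs) hst
  have hz0 : (0:ℝ) ≤ z := le_trans hs hz.1.le
  exact hsz.trans_le (hc.le_of_le hpos hz0 (hc.nonneg hpos hz0) hz.2)

theorem surjOn_Icc (hc : IsSolution f g c) {T : ℝ} (hT : 0 ≤ T) :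
    SurjOn c (Icc 0 T) (Icc 0 (c T)) := by
  simpa only [hc.zero] using (hc.continuousOn.mono Icc_subset_Ici_self).surjOn_Icc
    (left_mem_Icc.2 hT) (right_mem_Icc.2 hT)

theorem invFunOn_apply (hpos : ∀ x ≥ (0:ℝ), ∀ t ≥ (0:ℝ), 0 < f x + g t) (hc : IsSolution f g c)
    {T t : ℝ} (ht : t ∈ Icc 0 T) : Function.invFunOn c (Icc 0 T) (c t) = t :=
  ((hc.strictMonoOn hpos).mono Icc_subset_Ici_self).injOn.leftInvOn_invFunOn ht

theorem invFunOn_zero (hpos : ∀ x ≥ (0:ℝ), ∀ t ≥ (0:ℝ), 0 < f x + g t) (hc : IsSolution f g c)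
    {T : ℝ} (hT : 0 ≤ T) : Function.invFunOn c (Icc 0 T) 0 = 0 := by
  simpa only [hc.zero] using hc.invFunOn_apply hpos (left_mem_Icc.2 hT)

theorem continuousOn_invFunOn (hpos : ∀ x ≥ (0:ℝ), ∀ t ≥ (0:ℝ), 0 < f x + g t)
    (hc : IsSolution f g c) {T : ℝ} (hT : 0 ≤ T) :
    ContinuousOn (Function.invFunOn c (Icc 0 T)) (Icc 0 (c T)) := by
  simpa only [hc.zero] using StrictMonoOn.continuousOn_invFunOn_Icc hT
    (hc.continuousOn.mono Icc_subset_Ici_self) ((hc.strictMonoOn hpos).mono Icc_subset_Ici_self)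

theorem hasDerivWithinAt_invFunOn (hpos : ∀ x ≥ (0:ℝ), ∀ t ≥ (0:ℝ), 0 < f x + g t)
    (hc : IsSolution f g c) {T x : ℝ} (hT : 0 ≤ T) (hx : x ∈ Ico 0 (c T)) :
    HasDerivWithinAt (Function.invFunOn c (Icc 0 T))
      (f x + g (Function.invFunOn c (Icc 0 T) x))⁻¹ (Ici x) x := by
  set ψ := Function.invFunOn c (Icc 0 T)
  have hJ : Icc 0 (c T) ∈ 𝓝[≥] x := Icc_mem_nhdsGE_of_mem hx
  have hcψ : ∀ y ∈ Icc 0 (c T), c (ψ y) = y := (hc.surjOn_Icc hT).rightInvOn_invFunOn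
  have hψ : MapsTo ψ (Icc 0 (c T)) (Icc 0 T) := (hc.surjOn_Icc hT).mapsTo_invFunOn
  have hx' : x ∈ Icc 0 (c T) := Ico_subset_Icc_self hx
  have hψ_mono : ∀ y ∈ Icc 0 (c T), x ≤ y → ψ x ∈ Iic (ψ y) := fun y hy hxy =>
    ((hc.strictMonoOn hpos).le_iff_le (hψ hx').1 (hψ hy).1).1 (by rwa [hcψ x hx', hcψ y hy])
  have hderiv : HasDerivWithinAt c (f x + g (ψ x)) (Ici (ψ x)) (ψ x) := by
    simpa only [hcψ x hx'] using hc.hasDerivWithinAt (ψ x) (hψ hx').1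
  refine hderiv.of_local_left_inverse ?_ (hpos _ hx.1 _ (hψ hx').1).ne' self_mem_Ici
    (eventually_of_mem hJ hcψ)
  refine tendsto_nhdsWithin_iff.2
    ⟨(hc.continuousOn_invFunOn hpos hT x hx').mono_of_mem_nhdsWithin hJ, ?_⟩
  filter_upwards [hJ, self_mem_nhdsWithin] with y hy hxy using hψ_mono y hy hxy

theorem le_of_monotoneOn {d : ℝ → ℝ} (hg : MonotoneOn g (Ici 0))
    (hpos : ∀ x ≥ (0:ℝ), ∀ t ≥ (0:ℝ), 0 < f x + g t) (hc : IsSolution f g c)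
    (hd : IsSolution f g d) {t : ℝ} (ht : 0 ≤ t) : c t ≤ d t := by
  by_contra! hlt
  set ψc := Function.invFunOn c (Icc 0 t)
  set ψd := Function.invFunOn d (Icc 0 t)
  have hψc : MapsTo ψc (Icc 0 (c t)) (Icc 0 t) := (hc.surjOn_Icc ht).mapsTo_invFunOn
  have hψd : MapsTo ψd (Icc 0 (d t)) (Icc 0 t) := (hd.surjOn_Icc ht).mapsTo_invFunOn
  have hsub : Icc 0 (d t) ⊆ Icc 0 (c t) := Icc_subset_Icc_right hlt.le
  have hzero : ψd 0 - ψc 0 ≤ 0 := by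
    rw [show ψd 0 = 0 from hd.invFunOn_zero hpos ht, show ψc 0 = 0 from hc.invFunOn_zero hpos ht,
      sub_self]
  have hrate : ∀ x ∈ Ico 0 (d t), 0 < ψd x - ψc x →
      (f x + g (ψd x))⁻¹ - (f x + g (ψc x))⁻¹ ≤ 0 := fun x hx hgt => by
    have hψcx := (hψc (hsub (Ico_subset_Icc_self hx))).1
    exact sub_nonpos.2 <| inv_anti₀ (hpos x hx.1 _ hψcx) <| add_le_add le_rfl
      (hg hψcx (hψd (Ico_subset_Icc_self hx)).1 (sub_pos.1 hgt).le)
  have hgap : ψd (d t) - ψc (d t) ≤ 0 := image_nonpos_of_deriv_right_nonpos_of_pos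
    ((hd.continuousOn_invFunOn hpos ht).sub ((hc.continuousOn_invFunOn hpos ht).mono hsub))
    (fun x hx => (hd.hasDerivWithinAt_invFunOn hpos ht hx).sub
      (hc.hasDerivWithinAt_invFunOn hpos ht ⟨hx.1, hx.2.trans hlt⟩))
    hzero hrate (right_mem_Icc.2 (hd.nonneg hpos ht))
  have hψd_end : ψd (d t) = t := hd.invFunOn_apply hpos (right_mem_Icc.2 ht)
  have hψc_end : ψc (d t) < t := by
    have hmem := hψc (hsub (right_mem_Icc.2 (hd.nonneg hpos ht)))
    refine ((hc.strictMonoOn hpos).lt_iff_lt hmem.1 ht).1 ?_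
    rwa [(hc.surjOn_Icc ht).rightInvOn_invFunOn (hsub (right_mem_Icc.2 (hd.nonneg hpos ht)))]
  linarith

end IsSolution

/-- if `f(x) + g(t) > 0` for all `x, t ≥ 0`, then the initial value
problem `c'₊ = f ∘ c + g`, `c(0) = 0`, has at most one solution. -/
theorem uniqueness_positive_rate
    (f fm g gm : ℝ → ℝ)
    (hadm : AdmissiblePair f fm g gm)
    (hpos : ∀ x ≥ (0:ℝ), ∀ t ≥ (0:ℝ), 0 < f x + g t)
    (c ct : ℝ → ℝ)
    (hc_cont : ContinuousOn c (Ici 0)) (hc0 : c 0 = 0)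
    (hc_deriv : ∀ t ≥ (0:ℝ), HasDerivWithinAt c (f (c t) + g t) (Ici t) t)
    (hct_cont : ContinuousOn ct (Ici 0)) (hct0 : ct 0 = 0)
    (hct_deriv : ∀ t ≥ (0:ℝ), HasDerivWithinAt ct (f (ct t) + g t) (Ici t) t) :
    ∀ t ≥ (0:ℝ), c t = ct t := by
  obtain ⟨-, -, -, -, -, hg_mono, -⟩ := hadm
  have hg : MonotoneOn g (Ici 0) := fun s hs _ _ hst => hg_mono s _ hs hst
  have hc : IsSolution f g c := ⟨hc_cont, hc0, hc_deriv⟩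
  have hct : IsSolution f g ct := ⟨hct_cont, hct0, hct_deriv⟩
  exact fun t ht => le_antisymm (hc.le_of_monotoneOn hg hpos hct ht)
    (hct.le_of_monotoneOn hg hpos hc ht)
end

section
/- Define f(x) = √(1−x) for x < 1 and f(x) = 1 for x ≥ 1. Then the function c(t) = t − t²/4 for t ≤ 2 and c(t) = c(2) + (t−2) = 1 + (t−2) for t ≥ 2 is the unique solution of the initial value problem c'₊ = f∘c, c(0) = 0, but the functional inequality ∫ₛᵗ f₋(c̃(r)) dr ≤ c̃(t) − c̃(s) ≤ ∫ₛᵗ f(c̃(r)) dr (for all s ≤ t) with c̃(0)=0 and c̃ non-decreasing admits at least two solutions: c itself and c̃(t) = min(c(t), 1). -/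
open Set MeasureTheory Filter

/-- `f(x) = √(1−x)` for `x < 1`, `f(x) = 1` for `x ≥ 1`. -/
noncomputable def fEx : ℝ → ℝ := fun x => if x < 1 then Real.sqrt (1 - x) else 1

/-- The left-limit function of `fEx` (it has a single positive jump at `1`). -/
noncomputable def fExm : ℝ → ℝ := fun x => if x ≤ 1 then Real.sqrt (1 - x) else 1

/-- The unique solution of the IVP `c'₊ = fEx ∘ c`, `c(0) = 0`. -/
noncomputable def cEx : ℝ → ℝ := fun t => if t ≤ 2 then t - t ^ 2 / 4 else 1 + (t - 2)

/-- The second solution of the functional inequality: `c̃ = min(c, 1)`. -/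
noncomputable def ctEx : ℝ → ℝ := fun t => min (cEx t) 1

/-! Separation of variables: if `G` is a primitive of `1 / f` with `f > 0`, then `G ∘ d` has
right derivative `1` along every solution `d` of `d'₊ = f ∘ d`, so `G ∘ d` is a translation and
injectivity of `G` gives uniqueness. The functional inequality is weaker because its lower
bound uses `f₋`, and `f₋(1) = 0`: `c̃ = min(c, 1)`, which stops at the jump point `1` of `f`,
solves `c̃'₊ = f₋ ∘ c̃`, and its increments are bounded by those of `c`, while `f ∘ c̃ = f ∘ c`. -/

theorem integral_eq_sub_of_hasDerivWithinAt_Ioi_of_nonneg {g g' : ℝ → ℝ} {a b : ℝ} (hab : a ≤ b)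
    (hcont : ContinuousOn g (Icc a b)) (hderiv : ∀ x ∈ Ioo a b, HasDerivWithinAt g (g' x) (Ioi x) x)
    (hpos : ∀ x ∈ Ioo a b, 0 ≤ g' x) : ∫ x in a..b, g' x = g b - g a :=
  intervalIntegral.integral_eq_sub_of_hasDeriv_right_of_le hab hcont hderiv <|
    (intervalIntegrable_iff_integrableOn_Ioc_of_le hab).2 <|
      intervalIntegral.integrableOn_deriv_right_of_nonneg hcont hderiv hpos

def IsRightSolution (f d : ℝ → ℝ) : Prop :=
  ContinuousOn d (Ici 0) ∧ ∀ t ≥ (0 : ℝ), HasDerivWithinAt d (f (d t)) (Ici t) t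

namespace IsRightSolution

variable {f d e : ℝ → ℝ}

theorem integral_eq_sub (hd : IsRightSolution f d) (hf : ∀ x, 0 ≤ f x) {s t : ℝ} (hs : 0 ≤ s)
    (hst : s ≤ t) : ∫ r in s..t, f (d r) = d t - d s :=
  integral_eq_sub_of_hasDerivWithinAt_Ioi_of_nonneg hst (hd.1.mono fun _ hr => hs.trans hr.1)
    (fun r hr => (hd.2 r (hs.trans hr.1.le)).mono Ioi_subset_Ici_self) fun _ _ => hf _

theorem monotoneOn (hd : IsRightSolution f d) (hf : ∀ x, 0 ≤ f x) : MonotoneOn d (Ici 0) :=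
  fun _ hs _ _ hst => sub_nonneg.1 <|
    hd.integral_eq_sub hf hs hst ▸ intervalIntegral.integral_nonneg hst fun _ _ => hf _

theorem hasDerivWithinAt_comp_primitive {G : ℝ → ℝ} (hf : ∀ x, 0 < f x)
    (hG : ∀ x, HasDerivWithinAt G (f x)⁻¹ (Ici x) x) (hd : IsRightSolution f d) {t : ℝ}
    (ht : 0 ≤ t) : HasDerivWithinAt (G ∘ d) 1 (Ici t) t := by
  have hmaps : MapsTo d (Ici t) (Ici (d t)) := fun r hr =>
    hd.monotoneOn (fun x => (hf x).le) ht (ht.trans hr) hr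
  simpa [inv_mul_cancel₀ (hf (d t)).ne'] using (hG (d t)).comp t (hd.2 t ht) hmaps

theorem eqOn_of_primitive {G : ℝ → ℝ} (hf : ∀ x, 0 < f x) (hGc : Continuous G)
    (hGi : Function.Injective G) (hG : ∀ x, HasDerivWithinAt G (f x)⁻¹ (Ici x) x)
    (hd : IsRightSolution f d) (he : IsRightSolution f e) (h0 : d 0 = e 0) :
    EqOn d e (Ici 0) := fun t ht =>
  hGi <| eq_of_has_deriv_right_eq (f := G ∘ d) (g := G ∘ e)
    (fun _ hx => hd.hasDerivWithinAt_comp_primitive hf hG hx.1)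
    (fun _ hx => he.hasDerivWithinAt_comp_primitive hf hG hx.1)
    (hGc.comp_continuousOn (hd.1.mono Icc_subset_Ici_self))
    (hGc.comp_continuousOn (he.1.mono Icc_subset_Ici_self))
    (congrArg G h0) t ⟨ht, le_rfl⟩

end IsRightSolution

theorem fEx_pos (x : ℝ) : 0 < fEx x := by
  unfold fEx
  split_ifs with h
  · exact Real.sqrt_pos.2 (by linarith)
  · exact one_pos

theorem fExm_nonneg (x : ℝ) : 0 ≤ fExm x := by
  unfold fExm
  split_ifs
  exacts [Real.sqrt_nonneg _, zero_le_one]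

theorem fExm_eq_fEx {x : ℝ} (hx : x ≠ 1) : fExm x = fEx x := by
  rcases hx.lt_or_gt with h | h
  · simp [fExm, fEx, h, h.le]
  · simp [fExm, fEx, h.not_gt, h.not_ge]

theorem fEx_min_one (x : ℝ) : fEx (min x 1) = fEx x := by
  rcases lt_or_ge x 1 with h | h
  · rw [min_eq_left h.le]
  · simp [fEx, min_eq_right h, h.not_gt]

/-- A primitive of `1 / fEx`. -/
noncomputable def primInvFEx : ℝ → ℝ := fun x => if x ≤ 1 then 2 - 2 * Real.sqrt (1 - x) else 1 + x

theorem primInvFEx_of_one_le {x : ℝ} (hx : 1 ≤ x) : primInvFEx x = 1 + x := by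
  rcases hx.eq_or_lt with rfl | h
  · norm_num [primInvFEx]
  · simp [primInvFEx, h.not_ge]

theorem continuous_primInvFEx : Continuous primInvFEx :=
  Continuous.if_le (by fun_prop) (by fun_prop) continuous_id continuous_const fun x hx => by
    subst hx; norm_num

theorem primInvFEx_strictMono : StrictMono primInvFEx := by
  intro x y hxy
  rcases le_or_gt y 1 with hy | hy
  · simp only [primInvFEx, if_pos hy, if_pos (hxy.le.trans hy)]
    linarith [Real.sqrt_lt_sqrt (by linarith : 0 ≤ 1 - y) (by linarith : 1 - y < 1 - x)]
  · rw [primInvFEx_of_one_le hy.le]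
    rcases le_or_gt x 1 with hx | hx
    · simp only [primInvFEx, if_pos hx]
      linarith [Real.sqrt_nonneg (1 - x)]
    · rw [primInvFEx_of_one_le hx.le]
      linarith

theorem hasDerivWithinAt_primInvFEx (x : ℝ) :
    HasDerivWithinAt primInvFEx (fEx x)⁻¹ (Ici x) x := by
  rcases lt_or_ge x 1 with hx | hx
  · have hs : Real.sqrt (1 - x) ≠ 0 := Real.sqrt_ne_zero'.2 (by linarith)
    have hsqrt := ((Real.hasDerivAt_sqrt (by linarith : 1 - x ≠ 0)).comp x
      ((hasDerivAt_id x).const_sub 1)).const_mul 2 |>.const_sub 2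
    have hG : primInvFEx =ᶠ[nhds x] fun y => 2 - 2 * Real.sqrt (1 - y) := by
      filter_upwards [Iio_mem_nhds hx] with y hy
      exact if_pos hy.le
    refine (hsqrt.congr_of_eventuallyEq hG).hasDerivWithinAt.congr_deriv ?_
    simp only [fEx, if_pos hx]
    field_simp
  · have hG : HasDerivWithinAt (fun y => 1 + y) 1 (Ici x) x :=
      ((hasDerivAt_id x).const_add 1).hasDerivWithinAt
    simpa [fEx, hx.not_gt] using
      hG.congr (fun y hy => primInvFEx_of_one_le (hx.trans hy)) (primInvFEx_of_one_le hx)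

theorem cEx_of_le {t : ℝ} (h : t ≤ 2) : cEx t = t - t ^ 2 / 4 := if_pos h

theorem cEx_of_ge {t : ℝ} (h : 2 ≤ t) : cEx t = t - 1 := by
  rcases h.eq_or_lt with rfl | h
  · norm_num [cEx]
  · simp only [cEx, if_neg h.not_ge]
    ring

theorem one_sub_cEx {t : ℝ} (h : t ≤ 2) : 1 - cEx t = (1 - t / 2) ^ 2 := by
  rw [cEx_of_le h]
  ring

theorem cEx_le_one {t : ℝ} (h : t ≤ 2) : cEx t ≤ 1 := by
  nlinarith [one_sub_cEx h]

theorem cEx_lt_one {t : ℝ} (h : t < 2) : cEx t < 1 := by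
  nlinarith [one_sub_cEx h.le]

theorem one_lt_cEx {t : ℝ} (h : 2 < t) : 1 < cEx t := by
  rw [cEx_of_ge h.le]
  linarith

theorem cEx_zero : cEx 0 = 0 := by norm_num [cEx]

theorem continuous_cEx : Continuous cEx :=
  Continuous.if_le (by fun_prop) (by fun_prop) continuous_id continuous_const fun x hx => by
    subst hx; norm_num

theorem hasDerivAt_cEx {t : ℝ} (h : t < 2) : HasDerivAt cEx (fEx (cEx t)) t := by
  have hpoly := (hasDerivAt_id t).sub ((hasDerivAt_pow 2 t).div_const 4)
  have hc : cEx =ᶠ[nhds t] fun y => y - y ^ 2 / 4 := by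
    filter_upwards [Iio_mem_nhds h] with y hy
    exact cEx_of_le hy.le
  refine (hpoly.congr_of_eventuallyEq hc).congr_deriv ?_
  rw [fEx, if_pos (cEx_lt_one h), one_sub_cEx h.le, Real.sqrt_sq (by linarith)]
  simp only [Nat.cast_ofNat]
  ring

theorem isRightSolution_cEx : IsRightSolution fEx cEx := by
  refine ⟨continuous_cEx.continuousOn, fun t _ => ?_⟩
  rcases lt_or_ge t 2 with h | h
  · exact (hasDerivAt_cEx h).hasDerivWithinAt
  · have hlin : HasDerivWithinAt (fun y => y - 1) 1 (Ici t) t :=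
      ((hasDerivAt_id t).sub_const 1).hasDerivWithinAt
    rw [cEx_of_ge h, fEx, if_neg (by linarith)]
    exact hlin.congr (fun y hy => cEx_of_ge (h.trans hy)) (cEx_of_ge h)

theorem ctEx_of_le {t : ℝ} (h : t ≤ 2) : ctEx t = cEx t := min_eq_left (cEx_le_one h)

theorem ctEx_of_ge {t : ℝ} (h : 2 ≤ t) : ctEx t = 1 :=
  min_eq_right (by rw [cEx_of_ge h]; linarith)

theorem isRightSolution_ctEx : IsRightSolution fExm ctEx := by
  refine ⟨(continuous_cEx.min continuous_const).continuousOn, fun t _ => ?_⟩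
  rcases lt_or_ge t 2 with h | h
  · have hct : ctEx =ᶠ[nhds t] cEx := by
      filter_upwards [Iio_mem_nhds h] with y hy
      exact ctEx_of_le hy.le
    rw [ctEx_of_le h.le, fExm_eq_fEx (cEx_lt_one h).ne]
    exact ((hasDerivAt_cEx h).congr_of_eventuallyEq hct).hasDerivWithinAt
  · rw [ctEx_of_ge h]
    simpa [fExm] using (hasDerivWithinAt_const t (Ici t) (1 : ℝ)).congr
      (fun y hy => ctEx_of_ge (h.trans hy)) (ctEx_of_ge h)

theorem cEx_functional_ineq {s t : ℝ} (hs : 0 ≤ s) (hst : s ≤ t) :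
    (∫ r in s..t, fExm (cEx r)) ≤ cEx t - cEx s ∧
      cEx t - cEx s ≤ ∫ r in s..t, fEx (cEx r) := by
  have hint := isRightSolution_cEx.integral_eq_sub (fun x => (fEx_pos x).le) hs hst
  have hm : (∫ r in s..t, fExm (cEx r)) = ∫ r in s..t, fEx (cEx r) := by
    refine intervalIntegral.integral_congr_ae ?_
    filter_upwards [volume.ae_ne (2 : ℝ)] with r hr _
    rcases hr.lt_or_gt with h | h
    · exact fExm_eq_fEx (cEx_lt_one h).ne
    · exact fExm_eq_fEx (one_lt_cEx h).ne'
  exact ⟨(hm.trans hint).le, hint.ge⟩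

theorem ctEx_functional_ineq {s t : ℝ} (hs : 0 ≤ s) (hst : s ≤ t) :
    (∫ r in s..t, fExm (ctEx r)) ≤ ctEx t - ctEx s ∧
      ctEx t - ctEx s ≤ ∫ r in s..t, fEx (ctEx r) := by
  refine ⟨(isRightSolution_ctEx.integral_eq_sub fExm_nonneg hs hst).le, ?_⟩
  have hc : cEx s ≤ cEx t := isRightSolution_cEx.monotoneOn (fun x => (fEx_pos x).le) hs
    (hs.trans hst) hst
  calc ctEx t - ctEx s ≤ cEx t - cEx s := by
        simp only [ctEx, min_def]
        split_ifs <;> linarith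
    _ = ∫ r in s..t, fEx (cEx r) :=
        (isRightSolution_cEx.integral_eq_sub (fun x => (fEx_pos x).le) hs hst).symm
    _ = ∫ r in s..t, fEx (ctEx r) := by simp only [ctEx, fEx_min_one]

/-- `cEx` is the unique solution of the IVP `c'₊ = f ∘ c`, `c(0)=0`,
but the two-sided functional inequality
`∫ₛᵗ f₋(c̃(r)) dr ≤ c̃(t) − c̃(s) ≤ ∫ₛᵗ f(c̃(r)) dr` with `c̃` non-decreasing,
`c̃(0) = 0`, admits (at least) the two distinct solutions `cEx` and `ctEx`. -/
theorem ivp_unique_but_inequality_not :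
    -- cEx solves the IVP
    (cEx 0 = 0 ∧ ∀ t ≥ (0:ℝ), HasDerivWithinAt cEx (fEx (cEx t)) (Ici t) t) ∧
    -- and it is the unique solution of the IVP
    (∀ d : ℝ → ℝ, ContinuousOn d (Ici 0) → d 0 = 0 →
      (∀ t ≥ (0:ℝ), HasDerivWithinAt d (fEx (d t)) (Ici t) t) →
      ∀ t ≥ (0:ℝ), d t = cEx t) ∧
    -- cEx is a non-decreasing solution of the functional inequality
    (cEx 0 = 0 ∧ (∀ s t, (0:ℝ) ≤ s → s ≤ t → cEx s ≤ cEx t) ∧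
      ∀ s t, (0:ℝ) ≤ s → s ≤ t →
        (∫ r in s..t, fExm (cEx r)) ≤ cEx t - cEx s ∧
        cEx t - cEx s ≤ ∫ r in s..t, fEx (cEx r)) ∧
    -- ctEx is another non-decreasing solution of the functional inequality
    (ctEx 0 = 0 ∧ (∀ s t, (0:ℝ) ≤ s → s ≤ t → ctEx s ≤ ctEx t) ∧
      ∀ s t, (0:ℝ) ≤ s → s ≤ t →
        (∫ r in s..t, fExm (ctEx r)) ≤ ctEx t - ctEx s ∧
        ctEx t - ctEx s ≤ ∫ r in s..t, fEx (ctEx r)) ∧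
    -- and the two solutions differ
    (∃ t ≥ (0:ℝ), cEx t ≠ ctEx t) := by
  have hc := isRightSolution_cEx
  have hc_mono := hc.monotoneOn fun x => (fEx_pos x).le
  have hct_zero : ctEx 0 = 0 := by rw [ctEx_of_le zero_le_two, cEx_zero]
  have hct_mono : MonotoneOn ctEx (Ici 0) :=
    isRightSolution_ctEx.monotoneOn fExm_nonneg
  refine ⟨⟨cEx_zero, hc.2⟩, ?_, ⟨cEx_zero, ?_, fun s t => cEx_functional_ineq⟩,
    ⟨hct_zero, ?_, fun s t => ctEx_functional_ineq⟩, 3, by norm_num, ?_⟩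
  · intro d hd_cont hd_zero hd_deriv t ht
    exact IsRightSolution.eqOn_of_primitive fEx_pos continuous_primInvFEx
      primInvFEx_strictMono.injective hasDerivWithinAt_primInvFEx ⟨hd_cont, hd_deriv⟩ hc
      (hd_zero.trans cEx_zero.symm) ht
  · exact fun s t hs hst => hc_mono hs (hs.trans hst) hst
  · exact fun s t hs hst => hct_mono hs (hs.trans hst) hst
  · rw [cEx_of_ge (by norm_num), ctEx_of_ge (by norm_num)]
    norm_num
end
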